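/- Let P be a probability measure on a measurable space Ω and let E, H be measurable events with P(E ∩ H) > 0, P(Eᶜ ∩ H) > 0 and P(Hᶜ) > 0. For any real number l, the single-likelihood Adams conditioning Q_l of P at (l, E, H) satisfies Q_l⁰(E|Hᶜ) = P⁰(E|Hᶜ) and Q_l⁰(Eᶜ|Hᶜ) = P⁰(Eᶜ|Hᶜ); that is, Adams conditioning on the likelihood of E given H leaves the likelihoods of E and of Eᶜ given Hᶜ unchanged. -/

import Mathlib

/-!
Adams conditioning rescales the set function only inside `H`, so on subsets of `Hᶜ` it agrees
with the original one; conditioning on `Hᶜ` evaluates it only on such subsets.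
-/

open MeasureTheory Set

variable {Ω : Type*} [MeasurableSpace Ω]

/-- Real-valued probability of an event. -/
noncomputable def pr (P : MeasureTheory.Measure Ω) : Set Ω → ℝ := fun A => (P A).toReal

/-- Conditional probability `Q⁰(A|B) = Q(A ∩ B)/Q(B)` of a set function (with `x/0 = 0`). -/
noncomputable def cond0 (Q : Set Ω → ℝ) (A B : Set Ω) : ℝ := Q (A ∩ B) / Q B

/-- Single-likelihood Adams conditioning of the set function `Q` at `(l, E, H)`. -/
noncomputable def slac (Q : Set Ω → ℝ) (l : ℝ) (E H : Set Ω) : Set Ω → ℝ :=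
  fun x => Q (H ∩ E ∩ x) * (l / cond0 Q E H)
    + Q (H ∩ Eᶜ ∩ x) * ((1 - l) / cond0 Q Eᶜ H)
    + Q (Hᶜ ∩ x)

/-- Double-likelihood Adams conditioning of the set function `Q` at `(l, l', E, H)`. -/
noncomputable def dlac (Q : Set Ω → ℝ) (l l' : ℝ) (E H : Set Ω) : Set Ω → ℝ :=
  fun x => Q (H ∩ E ∩ x) * (l / cond0 Q E H)
    + Q (H ∩ Eᶜ ∩ x) * ((1 - l) / cond0 Q Eᶜ H)
    + Q (Hᶜ ∩ E ∩ x) * (l' / cond0 Q E Hᶜ)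
    + Q (Hᶜ ∩ Eᶜ ∩ x) * ((1 - l') / cond0 Q Eᶜ Hᶜ)

lemma pr_empty (P : Measure Ω) : pr P ∅ = 0 := by
  simp [pr]

lemma slac_apply_of_subset_compl {α : Type*} {Q : Set α → ℝ} (hQ : Q ∅ = 0) (l : ℝ)
    {E H x : Set α} (hx : x ⊆ Hᶜ) : slac Q l E H x = Q x := by
  have hHx : Disjoint H x := subset_compl_iff_disjoint_left.mp hx
  have hH_inter (F : Set α) : H ∩ F ∩ x = ∅ :=
    disjoint_iff_inter_eq_empty.mp (hHx.mono_left inter_subset_left)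
  simp only [slac, hH_inter, hQ, inter_eq_self_of_subset_right hx, zero_mul, zero_add]

lemma cond0_slac_compl {α : Type*} {Q : Set α → ℝ} (hQ : Q ∅ = 0) (l : ℝ) (A E H : Set α) :
    cond0 (slac Q l E H) A Hᶜ = cond0 Q A Hᶜ := by
  simp only [cond0, slac_apply_of_subset_compl hQ l inter_subset_right,
    slac_apply_of_subset_compl hQ l subset_rfl]

theorem stmt_3_general (P : MeasureTheory.Measure Ω)
    (E H : Set Ω) (l : ℝ) :
    cond0 (slac (pr P) l E H) E Hᶜ = cond0 (pr P) E Hᶜ ∧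
    cond0 (slac (pr P) l E H) Eᶜ Hᶜ = cond0 (pr P) Eᶜ Hᶜ :=
  ⟨cond0_slac_compl (pr_empty P) l E E H, cond0_slac_compl (pr_empty P) l Eᶜ E H⟩

theorem stmt_3 (P : MeasureTheory.Measure Ω) [IsProbabilityMeasure P]
    (E H : Set Ω) (hE : MeasurableSet E) (hH : MeasurableSet H)
    (hEH : 0 < pr P (E ∩ H)) (hEcH : 0 < pr P (Eᶜ ∩ H)) (hHc : 0 < pr P Hᶜ) (l : ℝ) :
    cond0 (slac (pr P) l E H) E Hᶜ = cond0 (pr P) E Hᶜ ∧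
    cond0 (slac (pr P) l E H) Eᶜ Hᶜ = cond0 (pr P) Eᶜ Hᶜ :=
  stmt_3_general P E H l
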